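/- Let Y ∼ (1/2)N(−θ*,1) + (1/2)N(θ*,1) with θ* ≥ 0 and f(θ) = E[Y·tanh(θY)]. Then f is concave on [0,∞) and convex on (−∞,0]. -/

import Mathlib

open MeasureTheory ProbabilityTheory
open scoped ENNReal

/-- The symmetric two-component Gaussian mixture `(1/2)N(−s,1) + (1/2)N(s,1)`. -/
noncomputable def mixG (s : ℝ) : Measure ℝ :=
  (1 / 2 : ℝ≥0∞) • gaussianReal (-s) 1 + (1 / 2 : ℝ≥0∞) • gaussianReal s 1

/-- The population EM map `f(θ) = E[Y·tanh(θY)]`, `Y ∼ mixG s`. -/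
noncomputable def emMap (s θ : ℝ) : ℝ := ∫ y, y * Real.tanh (θ * y) ∂(mixG s)

/-!
For each sample `y`, the map `θ ↦ y tanh(θy) = |y| tanh(θ|y|)` is concave on `[0,∞)` and
convex on `(−∞,0]`, because `tanh'' = −2 sinh / cosh³` has the sign opposite to that of its
argument. Since `|y tanh(θy)| ≤ |y|` and the mixture has a finite first moment, these pointwise
inequalities can be integrated, and `f` inherits both shapes.
-/

open Set Real

namespace Real

lemma continuous_tanh : Continuous tanh := by
  rw [funext tanh_eq_sinh_div_cosh]
  exact continuous_sinh.div continuous_cosh fun x => (cosh_pos x).ne'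

lemma hasDerivAt_tanh (x : ℝ) : HasDerivAt tanh (cosh x ^ 2)⁻¹ x := by
  rw [funext tanh_eq_sinh_div_cosh]
  refine ((hasDerivAt_sinh x).div (hasDerivAt_cosh x) (cosh_pos x).ne').congr_deriv ?_
  field_simp
  linear_combination cosh_sq_sub_sinh_sq x

lemma hasDerivAt_inv_cosh_sq (x : ℝ) :
    HasDerivAt (fun x => (cosh x ^ 2)⁻¹) (-(2 * sinh x) / cosh x ^ 3) x := by
  refine (((hasDerivAt_cosh x).pow 2).inv (pow_pos (cosh_pos x) 2).ne').congr_deriv ?_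
  simp only [Pi.pow_apply]
  field_simp
  ring

lemma concaveOn_tanh_Ici : ConcaveOn ℝ (Ici 0) tanh := by
  refine concaveOn_of_hasDerivWithinAt2_nonpos (convex_Ici 0) continuous_tanh.continuousOn
    (fun x _ => (hasDerivAt_tanh x).hasDerivWithinAt)
    (fun x _ => (hasDerivAt_inv_cosh_sq x).hasDerivWithinAt) fun x hx => ?_
  rw [interior_Ici] at hx
  have := sinh_pos_iff.2 hx
  have := cosh_pos x
  exact div_nonpos_of_nonpos_of_nonneg (by linarith) (by positivity)

lemma convexOn_tanh_Iic : ConvexOn ℝ (Iic 0) tanh := by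
  refine convexOn_of_hasDerivWithinAt2_nonneg (convex_Iic 0) continuous_tanh.continuousOn
    (fun x _ => (hasDerivAt_tanh x).hasDerivWithinAt)
    (fun x _ => (hasDerivAt_inv_cosh_sq x).hasDerivWithinAt) fun x hx => ?_
  rw [interior_Iic] at hx
  have := sinh_neg_iff.2 hx
  have := cosh_pos x
  exact div_nonneg (by linarith) (by positivity)

end Real

lemma mul_tanh_mul_eq_abs (y θ : ℝ) : y * tanh (θ * y) = |y| * tanh (θ * |y|) := by
  rcases abs_cases y with ⟨hy, -⟩ | ⟨hy, -⟩ <;> simp [hy, tanh_neg]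

lemma concaveOn_mul_tanh_mul (y : ℝ) : ConcaveOn ℝ (Ici 0) fun θ => y * tanh (θ * y) := by
  simp_rw [mul_tanh_mul_eq_abs y]
  have hmaps : Ici (0 : ℝ) ⊆ (LinearMap.mulRight ℝ |y|) ⁻¹' Ici (0 : ℝ) :=
    fun θ (hθ : 0 ≤ θ) => show 0 ≤ θ * |y| from mul_nonneg hθ (abs_nonneg y)
  exact ((concaveOn_tanh_Ici.comp_linearMap _).subset hmaps (convex_Ici 0)).smul (abs_nonneg y)

lemma convexOn_mul_tanh_mul (y : ℝ) : ConvexOn ℝ (Iic 0) fun θ => y * tanh (θ * y) := by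
  simp_rw [mul_tanh_mul_eq_abs y]
  have hmaps : Iic (0 : ℝ) ⊆ (LinearMap.mulRight ℝ |y|) ⁻¹' Iic (0 : ℝ) :=
    fun θ (hθ : θ ≤ 0) =>
      show θ * |y| ≤ 0 from mul_nonpos_of_nonpos_of_nonneg hθ (abs_nonneg y)
  exact ((convexOn_tanh_Iic.comp_linearMap _).subset hmaps (convex_Iic 0)).smul (abs_nonneg y)

section ParametricIntegral

variable {α E : Type*} [MeasurableSpace α] {μ : Measure α} [AddCommMonoid E] [Module ℝ E]
  {s : Set E} {g : α → E → ℝ}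

lemma ConvexOn.integral (hs : Convex ℝ s) (hg : ∀ a, ConvexOn ℝ s (g a))
    (hint : ∀ x ∈ s, Integrable (fun a => g a x) μ) :
    ConvexOn ℝ s fun x => ∫ a, g a x ∂μ := by
  refine ⟨hs, fun x hx y hy b c hb hc hbc => ?_⟩
  have hsum : Integrable (fun a => b * g a x + c * g a y) μ :=
    ((hint x hx).const_mul b).add ((hint y hy).const_mul c)
  calc ∫ a, g a (b • x + c • y) ∂μ
      ≤ ∫ a, (b * g a x + c * g a y) ∂μ :=
        integral_mono (hint _ (hs hx hy hb hc hbc)) hsum fun a => (hg a).2 hx hy hb hc hbc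
    _ = b • ∫ a, g a x ∂μ + c • ∫ a, g a y ∂μ := by
        rw [integral_add ((hint x hx).const_mul b) ((hint y hy).const_mul c),
          integral_const_mul, integral_const_mul, smul_eq_mul, smul_eq_mul]

lemma ConcaveOn.integral (hs : Convex ℝ s) (hg : ∀ a, ConcaveOn ℝ s (g a))
    (hint : ∀ x ∈ s, Integrable (fun a => g a x) μ) :
    ConcaveOn ℝ s fun x => ∫ a, g a x ∂μ := by
  simpa only [Pi.neg_def, integral_neg, neg_neg] using
    (ConvexOn.integral (g := fun a => -g a) hs (fun a => (hg a).neg)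
      fun x hx => (hint x hx).neg).neg

end ParametricIntegral

lemma integrable_mul_tanh_mul {μ : Measure ℝ} (hμ : Integrable id μ) (θ : ℝ) :
    Integrable (fun y => y * tanh (θ * y)) μ :=
  hμ.mul_bdd (c := 1)
    (continuous_tanh.comp (continuous_const.mul continuous_id)).aestronglyMeasurable
    (Filter.Eventually.of_forall fun _ => (abs_tanh_lt_one _).le)

lemma integrable_id_mixG (s : ℝ) : Integrable id (mixG s) := by
  have hgauss (m : ℝ) : Integrable id (gaussianReal m 1) :=
    memLp_one_iff_integrable.1 (memLp_id_gaussianReal 1)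
  rw [mixG, integrable_add_measure, integrable_smul_measure (by norm_num) (by norm_num),
    integrable_smul_measure (by norm_num) (by norm_num)]
  exact ⟨hgauss _, hgauss _⟩

theorem stmt_4_general (s : ℝ) :
    ConcaveOn ℝ (Set.Ici (0 : ℝ)) (emMap s) ∧
    ConvexOn ℝ (Set.Iic (0 : ℝ)) (emMap s) :=
  have hint (θ : ℝ) := integrable_mul_tanh_mul (integrable_id_mixG s) θ
  ⟨ConcaveOn.integral (convex_Ici 0) concaveOn_mul_tanh_mul fun θ _ => hint θ,
    ConvexOn.integral (convex_Iic 0) convexOn_mul_tanh_mul fun θ _ => hint θ⟩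

/-- `f` is concave on `[0,∞)` and convex on `(−∞,0]`. -/
theorem stmt_4 (s : ℝ) (hs : 0 ≤ s) :
    ConcaveOn ℝ (Set.Ici (0 : ℝ)) (emMap s) ∧
    ConvexOn ℝ (Set.Iic (0 : ℝ)) (emMap s) :=
  stmt_4_general s
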